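/- (Proposition 1, distributed form.) Let n ∈ ℕ and for each i ∈ Fin n let G^i = (Q^i, Σ^i, δ^i, q0^i) be a partial deterministic automaton with protectable events Σ_p^i ⊆ Σ^i. Let S be a set of n-tuples s with s^i ∈ Q^i and let R be a set of pairs (s, r) with s ∈ S and r ∈ ℕ. The following are equivalent: (1) there exist protection policies P^i : Q^i → Set Σ^i with P^i(q) ⊆ Σ_p^i for all q, such that for every (s, r) ∈ R there exists i for which every word w with δ^{i*}(q0^i, w) = some s^i satisfies pc(P^i, q0^i, w) ≥ r; (2) for every (s, r) ∈ R there exists i such that s^i is r-securely reachable with respect to G^i and Σ_p^i. -/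
import Mathlib


def run {Q : Type*} {E : Type*} (δ : Q → E → Option Q) : Q → List E → Option Q
  | q, [] => some q
  | q, σ :: w => (δ q σ).bind fun q' => run δ q' w

open Classical in
noncomputable def pcount {Q : Type*} {E : Type*} (δ : Q → E → Option Q)
    (P : Q → Set E) : Q → List E → ℕ
  | _, [] => 0
  | q, σ :: w =>
      (if σ ∈ P q then 1 else 0) +
        match δ q σ with
        | some q' => pcount δ P q' w
        | none => 0

open Classical in
def secureReach {Q : Type*} {E : Type*} (δ : Q → E → Option Q) (q0 : Q)
    (A : Set E) (r : ℕ) (qs : Q) : Prop :=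
  ∀ w : List E, run δ q0 w = some qs → w.countP (fun σ => σ ∈ A) ≥ r

open Classical in
lemma pcount_le_countP {Q : Type*} {E : Type*} (δ : Q → E → Option Q)
    (P : Q → Set E) (A : Set E) (hP : ∀ q, P q ⊆ A) :
    ∀ w q, pcount δ P q w ≤ w.countP (fun σ => decide (σ ∈ A)) := by
  intro w
  induction w with
  | nil => intro q; simp [pcount]
  | cons σ w ih =>
    intro q
    rw [List.countP_cons]
    simp only [pcount]
    have h1 : (if σ ∈ P q then 1 else 0) ≤ (if (decide (σ ∈ A)) = true then 1 else 0) := by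
      by_cases h : σ ∈ P q
      · simp [h, hP q h]
      · simp [h]
    have h2 : (match δ q σ with
        | some q' => pcount δ P q' w
        | none => 0) ≤ w.countP (fun σ => decide (σ ∈ A)) := by
      cases δ q σ with
      | none => exact Nat.zero_le _
      | some q' => exact ih q'
    omega

open Classical in
lemma pcount_full {Q : Type*} {E : Type*} (δ : Q → E → Option Q) (A : Set E) :
    ∀ w (q qs : Q), run δ q w = some qs →
      pcount δ (fun _ => A) q w = w.countP (fun σ => decide (σ ∈ A)) := by
  intro w
  induction w with
  | nil => intro q qs _; simp [pcount]
  | cons σ w ih =>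
    intro q qs hrun
    rw [List.countP_cons]
    simp only [run] at hrun
    cases hδ : δ q σ with
    | none => rw [hδ] at hrun; simp at hrun
    | some q' =>
      rw [hδ] at hrun
      simp only [pcount, hδ, ih q' qs hrun]
      by_cases h : σ ∈ A <;> simp [h, Nat.add_comm]

theorem dssp_solvable_iff_secure {n : ℕ} {Q E : Fin n → Type*}
    (δ : ∀ i, Q i → E i → Option (Q i)) (q0 : ∀ i, Q i)
    (Sp : ∀ i, Set (E i))
    (S : Set (∀ i, Q i)) (R : Set ((∀ i, Q i) × ℕ)) (hR : ∀ p ∈ R, p.1 ∈ S) :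
    (∃ P : ∀ i, Q i → Set (E i), (∀ i q, P i q ⊆ Sp i) ∧
        ∀ p ∈ R, ∃ i, ∀ w, run (δ i) (q0 i) w = some (p.1 i) →
          pcount (δ i) (P i) (q0 i) w ≥ p.2) ↔
      (∀ p ∈ R, ∃ i, secureReach (δ i) (q0 i) (Sp i) p.2 (p.1 i)) := by
  constructor
  · rintro ⟨P, hPsub, hP⟩ p hp
    obtain ⟨i, hi⟩ := hP p hp
    refine ⟨i, fun w hw => ?_⟩
    exact le_trans (hi w hw) (pcount_le_countP (δ i) (P i) (Sp i) (hPsub i) w (q0 i))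
  · intro h
    refine ⟨fun i _ => Sp i, fun i q => le_refl _, fun p hp => ?_⟩
    obtain ⟨i, hi⟩ := h p hp
    refine ⟨i, fun w hw => ?_⟩
    rw [pcount_full (δ i) (Sp i) w (q0 i) (p.1 i) hw]
    exact hi w hw
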